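/- arXiv:1803.00514 — 5 statements merged into one kernel-verified Lean document; each statement's English description precedes it below -/
import Mathlib

section
/- Let k be a field of characteristic different from 2 and 3, and let f = x⁴ + g₂x² + g₃x + g₄ ∈ k[x] be squarefree with g₂ ≠ 0 and g₃ ≠ 0. Set j₁ = g₂³/g₃² and j₂ = g₂g₄/g₃² (so j₁ ≠ 0). Then the polynomial x⁴ + j₁x² + j₁x + j₁j₂ is squarefree, and the normal-form Picard curve y³ = x⁴ + j₁x² + j₁x + j₁j₂ has the same invariant triple (j₁, j₂, j₃) as y³ = f(x); explicitly, with t = g₃/g₂ one has f(tX) = t⁴·(X⁴ + j₁X² + j₁X + j₁j₂). -/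
open Polynomial

theorem comp_dvd_comp_aux {k : Type*} [Field k] {a b : k[X]} (q : k[X]) (h : a ∣ b) :
    a.comp q ∣ b.comp q := by
  obtain ⟨c, rfl⟩ := h
  exact ⟨c.comp q, by rw [mul_comp]⟩

/-- (Case 1, `j₁ ≠ 0`.)  If `f = x⁴ + g₂x² + g₃x + g₄` is squarefree with
`g₂ ≠ 0` and `g₃ ≠ 0`, then the model `y³ = x⁴ + j₁x² + j₁x + j₁j₂` is a normal-form Picard
curve with the same invariant triple, obtained from `f` by the scaling `t = g₃ / g₂`. -/
theorem picard_model_case_one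
    {k : Type*} [Field k] (hchar2 : ringChar k ≠ 2) (hchar3 : ringChar k ≠ 3)
    (g₂ g₃ g₄ : k) (hg₂ : g₂ ≠ 0) (hg₃ : g₃ ≠ 0)
    (hsf : Squarefree (X ^ 4 + C g₂ * X ^ 2 + C g₃ * X + C g₄ : k[X]))
    (j₁ j₂ j₃ t : k)
    (hj₁ : j₁ = g₂ ^ 3 / g₃ ^ 2) (hj₂ : j₂ = g₂ * g₄ / g₃ ^ 2)
    (hj₃ : j₃ = g₄ ^ 3 / g₃ ^ 4) (ht : t = g₃ / g₂) :
    j₁ ≠ 0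
    ∧ Squarefree (X ^ 4 + C j₁ * X ^ 2 + C j₁ * X + C (j₁ * j₂) : k[X])
    ∧ j₁ ^ 3 / j₁ ^ 2 = j₁
    ∧ j₁ * (j₁ * j₂) / j₁ ^ 2 = j₂
    ∧ (j₁ * j₂) ^ 3 / j₁ ^ 4 = j₃
    ∧ (X ^ 4 + C g₂ * X ^ 2 + C g₃ * X + C g₄ : k[X]).comp (C t * X) =
        C (t ^ 4) * (X ^ 4 + C j₁ * X ^ 2 + C j₁ * X + C (j₁ * j₂)) := by
  have hj₁0 : j₁ ≠ 0 := by
    rw [hj₁]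
    exact div_ne_zero (pow_ne_zero _ hg₂) (pow_ne_zero _ hg₃)
  have ht0 : t ≠ 0 := by
    rw [ht]; exact div_ne_zero hg₃ hg₂
  have e1 : g₂ * t ^ 2 = t ^ 4 * j₁ := by
    rw [ht, hj₁]; field_simp
  have e2 : g₃ * t = t ^ 4 * j₁ := by
    rw [ht, hj₁]; field_simp
  have e3 : g₄ = t ^ 4 * (j₁ * j₂) := by
    rw [ht, hj₁, hj₂]; field_simp
  have key : (X ^ 4 + C g₂ * X ^ 2 + C g₃ * X + C g₄ : k[X]).comp (C t * X) =
      C (t ^ 4) * (X ^ 4 + C j₁ * X ^ 2 + C j₁ * X + C (j₁ * j₂)) := by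
    have E1 : (C g₂ * C t ^ 2 : k[X]) = C t ^ 4 * C j₁ := by
      rw [← C_pow, ← C_mul, ← C_pow, ← C_mul, e1]
    have E2 : (C g₃ * C t : k[X]) = C t ^ 4 * C j₁ := by
      rw [← C_mul, ← C_pow, ← C_mul, e2]
    have E3 : (C g₄ : k[X]) = C t ^ 4 * C (j₁ * j₂) := by
      rw [← C_pow, ← C_mul, e3]
    simp only [comp, eval₂_add, eval₂_mul, eval₂_pow, eval₂_X, eval₂_C, C_pow]
    linear_combination X ^ 2 * E1 + X * E2 + E3
  have hsfnew : Squarefree (X ^ 4 + C j₁ * X ^ 2 + C j₁ * X + C (j₁ * j₂) : k[X]) := by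
    intro p hp
    have h1 : p * p ∣ (X ^ 4 + C g₂ * X ^ 2 + C g₃ * X + C g₄ : k[X]).comp (C t * X) := by
      rw [key]; exact hp.mul_left _
    have hinv : ((C t * X : k[X]).comp (C t⁻¹ * X)) = X := by
      rw [mul_comp, C_comp, X_comp, ← mul_assoc, ← C_mul, mul_inv_cancel₀ ht0, C_1, one_mul]
    have h2 := comp_dvd_comp_aux (C t⁻¹ * X) h1
    rw [mul_comp, comp_assoc, hinv, comp_X] at h2
    have hu := hsf _ h2
    obtain ⟨u, hu0, huc⟩ := Polynomial.isUnit_iff.mp hu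
    have hpeq : p = C u := by
      have h3 : (p.comp (C t⁻¹ * X)).comp (C t * X) = p := by
        have hinv2 : ((C t⁻¹ * X : k[X]).comp (C t * X)) = X := by
          rw [mul_comp, C_comp, X_comp, ← mul_assoc, ← C_mul, inv_mul_cancel₀ ht0, C_1, one_mul]
        rw [comp_assoc, hinv2, comp_X]
      rw [← h3, ← huc, C_comp]
    rw [hpeq]
    exact isUnit_C.mpr hu0
  refine ⟨hj₁0, hsfnew, ?_, ?_, ?_, key⟩
  · field_simp
  · field_simp
  · rw [hj₁, hj₂, hj₃]; field_simp
end

section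
/- Let k be a field of characteristic different from 2 and 3, and let f = x⁴ + g₃x + g₄ ∈ k[x] be squarefree with g₃ ≠ 0 and g₄ ≠ 0 (so g₂ = 0). Set j₃ = g₄³/g₃⁴ (so j₃ ≠ 0). Then the polynomial x⁴ + j₃²x + j₃³ is squarefree, and the normal-form Picard curve y³ = x⁴ + j₃²x + j₃³ has invariant triple (0, 0, j₃), the same as y³ = f(x); explicitly, with t = g₃³/g₄² one has f(tX) = t⁴·(X⁴ + j₃²X + j₃³). -/
/-!
With `t = g₃³/g₄²` one has `g₃ t = t⁴ j₃²` and `g₄ = t⁴ j₃³`, so substituting `x ↦ t x` turns `f`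
into `t⁴ (x⁴ + j₃² x + j₃³)`. The substitution is a ring automorphism of `k[x]`, hence preserves
squarefreeness, and the unit factor `t⁴` does not affect it.
-/

open Polynomial

theorem Squarefree.map_mulEquiv {R S : Type*} [Monoid R] [Monoid S] {x : R} (hx : Squarefree x)
    (f : R ≃* S) : Squarefree (f x) := fun y hy => by
  simpa using (hx (f.symm y) (by simpa using map_dvd f.symm hy)).map f

theorem Squarefree.comp_C_mul_X {K : Type*} [Field K] {p : K[X]} (hp : Squarefree p) {t : K}
    (ht : t ≠ 0) : Squarefree (p.comp (C t * X)) := by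
  have := invertibleOfNonzero ht
  simpa [comp_eq_aeval] using hp.map_mulEquiv (algEquivCMulXAddC t 0).toMulEquiv

namespace Polynomial

theorem quartic_comp_C_mul_X {R : Type*} [CommRing R] (a b t : R) :
    (X ^ 4 + C a * X + C b).comp (C t * X) = C (t ^ 4) * X ^ 4 + C (a * t) * X + C b := by
  simp only [add_comp, mul_comp, pow_comp, X_comp, C_comp, mul_pow, C_mul, C_pow]
  ring

end Polynomial

theorem picard_model_case_two_general
    {k : Type*} [Field k]
    (g₃ g₄ : k) (hg₃ : g₃ ≠ 0) (hg₄ : g₄ ≠ 0)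
    (hsf : Squarefree (X ^ 4 + C g₃ * X + C g₄ : k[X]))
    (j₃ t : k) (hj₃ : j₃ = g₄ ^ 3 / g₃ ^ 4) (ht : t = g₃ ^ 3 / g₄ ^ 2) :
    j₃ ≠ 0
    ∧ Squarefree (X ^ 4 + C (j₃ ^ 2) * X + C (j₃ ^ 3) : k[X])
    ∧ (0 : k) ^ 3 / (j₃ ^ 2) ^ 2 = 0
    ∧ (0 : k) * j₃ ^ 3 / (j₃ ^ 2) ^ 2 = 0
    ∧ (j₃ ^ 3) ^ 3 / (j₃ ^ 2) ^ 4 = j₃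
    ∧ (0 : k) ^ 3 / g₃ ^ 2 = 0
    ∧ (0 : k) * g₄ / g₃ ^ 2 = 0
    ∧ (X ^ 4 + C g₃ * X + C g₄ : k[X]).comp (C t * X) =
        C (t ^ 4) * (X ^ 4 + C (j₃ ^ 2) * X + C (j₃ ^ 3)) := by
  have hj₃0 : j₃ ≠ 0 := hj₃ ▸ by positivity
  have ht0 : t ≠ 0 := ht ▸ by positivity
  have hlin : g₃ * t = t ^ 4 * j₃ ^ 2 := by subst hj₃ ht; field_simp
  have hconst : g₄ = t ^ 4 * j₃ ^ 3 := by subst hj₃ ht; field_simp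
  have hcomp : (X ^ 4 + C g₃ * X + C g₄ : k[X]).comp (C t * X) =
      C (t ^ 4) * (X ^ 4 + C (j₃ ^ 2) * X + C (j₃ ^ 3)) := by
    rw [quartic_comp_C_mul_X, hlin, hconst]
    simp only [C_mul]
    ring
  refine ⟨hj₃0, ?_, by simp, by simp, by field_simp, by simp, by simp, hcomp⟩
  exact (hcomp ▸ hsf.comp_C_mul_X ht0).squarefree_of_dvd (dvd_mul_left _ _)

/-- (Case 2, `j₁ = 0`, `j₃ ≠ 0`.)  If `f = x⁴ + g₃x + g₄` is squarefree with
`g₃ ≠ 0` and `g₄ ≠ 0`, then the model `y³ = x⁴ + j₃²x + j₃³` is a normal-form Picard curve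
with invariant triple `(0, 0, j₃)`, obtained from `f` by the scaling `t = g₃³ / g₄²`. -/
theorem picard_model_case_two
    {k : Type*} [Field k] (hchar2 : ringChar k ≠ 2) (hchar3 : ringChar k ≠ 3)
    (g₃ g₄ : k) (hg₃ : g₃ ≠ 0) (hg₄ : g₄ ≠ 0)
    (hsf : Squarefree (X ^ 4 + C g₃ * X + C g₄ : k[X]))
    (j₃ t : k) (hj₃ : j₃ = g₄ ^ 3 / g₃ ^ 4) (ht : t = g₃ ^ 3 / g₄ ^ 2) :
    j₃ ≠ 0
    ∧ Squarefree (X ^ 4 + C (j₃ ^ 2) * X + C (j₃ ^ 3) : k[X])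
    ∧ (0 : k) ^ 3 / (j₃ ^ 2) ^ 2 = 0
    ∧ (0 : k) * j₃ ^ 3 / (j₃ ^ 2) ^ 2 = 0
    ∧ (j₃ ^ 3) ^ 3 / (j₃ ^ 2) ^ 4 = j₃
    ∧ (0 : k) ^ 3 / g₃ ^ 2 = 0
    ∧ (0 : k) * g₄ / g₃ ^ 2 = 0
    ∧ (X ^ 4 + C g₃ * X + C g₄ : k[X]).comp (C t * X) =
        C (t ^ 4) * (X ^ 4 + C (j₃ ^ 2) * X + C (j₃ ^ 3)) :=
  picard_model_case_two_general g₃ g₄ hg₃ hg₄ hsf j₃ t hj₃ ht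
end

section
/- Let k be an algebraically closed field of characteristic different from 2 and 3. Let f = x⁴ + g₂x² + g₃x + g₄ and f' = x⁴ + g₂'x² + g₃'x + g₄' be squarefree quartics over k with g₃ ≠ 0 and g₃' ≠ 0. If the invariant triples agree, i.e. g₂³/g₃² = g₂'³/g₃'², g₂g₄/g₃² = g₂'g₄'/g₃'², and g₄³/g₃⁴ = g₄'³/g₃'⁴, then there exists a nonzero t ∈ k with g₂' = g₂/t², g₃' = g₃/t³, and g₄' = g₄/t⁴; that is, the two normal-form Picard curves are isomorphic via the scaling x ↦ tx, y ↦ sy with s³ = t⁴. -/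
open Polynomial

/-! A cube root `t₀` of `g₃ / g₃'` rescales the first curve so that its `g₃` becomes `g₃'`.
With equal `g₃`, the three invariants say `g₂'³ = g₂³`, `g₂' g₄' = g₂ g₄` and `g₄'³ = g₄³`,
so `(g₂', g₄') = (ω g₂, ω² g₄)` for a cube root of unity `ω`; this is the scaling by `t = ω`,
and composing it with the first one gives `t = t₀ ω`. -/

theorem exists_cube_root_of_unity_of_cube_eq {K : Type*} [Field K] {a c a' c' : K}
    (h₁ : a' ^ 3 = a ^ 3) (h₂ : a' * c' = a * c) (h₃ : c' ^ 3 = c ^ 3) :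
    ∃ ω : K, ω ^ 3 = 1 ∧ a' = ω * a ∧ c' = ω ^ 2 * c := by
  by_cases ha : a = 0
  · have ha' : a' = 0 := by simpa [ha] using h₁
    by_cases hc : c = 0
    · exact ⟨1, one_pow 3, by simp [ha, ha'], by simpa [hc] using h₃⟩
    · refine ⟨(c' / c) ^ 2, ?_, by simp [ha, ha'], ?_⟩
      · rw [pow_right_comm, div_pow, h₃, div_self (pow_ne_zero 3 hc), one_pow]
      · field_simp
        linear_combination (-c') * h₃
  · have ha' : a' ≠ 0 := fun h => ha (by simpa [h] using h₁.symm)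
    refine ⟨a' / a, by rw [div_pow, h₁, div_self (pow_ne_zero 3 ha)], by field_simp, ?_⟩
    field_simp
    apply mul_left_cancel₀ ha'
    linear_combination a ^ 2 * h₂ - c * h₁

theorem picard_invariants_determine_curve_general
    {k : Type*} [Field k] [IsAlgClosed k]
    (g₂ g₃ g₄ g₂' g₃' g₄' : k) (hg₃ : g₃ ≠ 0) (hg₃' : g₃' ≠ 0)
    (h₁ : g₂ ^ 3 / g₃ ^ 2 = g₂' ^ 3 / g₃' ^ 2)
    (h₂ : g₂ * g₄ / g₃ ^ 2 = g₂' * g₄' / g₃' ^ 2)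
    (h₃ : g₄ ^ 3 / g₃ ^ 4 = g₄' ^ 3 / g₃' ^ 4) :
    ∃ t : k, t ≠ 0 ∧ g₂' = g₂ / t ^ 2 ∧ g₃' = g₃ / t ^ 3 ∧ g₄' = g₄ / t ^ 4 ∧
      ∃ s : k, s ^ 3 = t ^ 4 := by
  obtain ⟨t₀, ht₀⟩ := IsAlgClosed.exists_pow_nat_eq (g₃ / g₃') three_pos
  have ht₀0 : t₀ ≠ 0 := by
    rintro rfl
    exact div_ne_zero hg₃ hg₃' (by rw [← ht₀]; ring)
  obtain rfl : g₃ = t₀ ^ 3 * g₃' := by rw [ht₀]; field_simp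
  obtain ⟨ω, hω, hg₂', hg₄'⟩ := exists_cube_root_of_unity_of_cube_eq
    (a := g₂ / t₀ ^ 2) (c := g₄ / t₀ ^ 4) (a' := g₂') (c' := g₄')
    (by field_simp at h₁ ⊢; linear_combination -h₁)
    (by field_simp at h₂ ⊢; linear_combination -h₂)
    (by field_simp at h₃ ⊢; linear_combination -h₃)
  have hω0 : ω ≠ 0 := by rintro rfl; simp at hω
  refine ⟨t₀ * ω, mul_ne_zero ht₀0 hω0, ?_, ?_, ?_, IsAlgClosed.exists_pow_nat_eq _ three_pos⟩
  · rw [hg₂']; field_simp; linear_combination g₂ * hω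
  · field_simp; exact hω
  · rw [hg₄']; field_simp; linear_combination g₄ * (ω ^ 3 + 1) * hω

/-- Over an algebraically closed field, two normal-form Picard curves with
`g₃ ≠ 0` and the same invariant triple are related by the scaling
`(g₂, g₃, g₄) ↦ (g₂/t², g₃/t³, g₄/t⁴)` for some nonzero `t`, i.e. they are isomorphic via
`x ↦ tx`, `y ↦ sy` with `s³ = t⁴`. -/
theorem picard_invariants_determine_curve
    {k : Type*} [Field k] [IsAlgClosed k]
    (hchar2 : ringChar k ≠ 2) (hchar3 : ringChar k ≠ 3)
    (g₂ g₃ g₄ g₂' g₃' g₄' : k) (hg₃ : g₃ ≠ 0) (hg₃' : g₃' ≠ 0)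
    (hsf : Squarefree (X ^ 4 + C g₂ * X ^ 2 + C g₃ * X + C g₄ : k[X]))
    (hsf' : Squarefree (X ^ 4 + C g₂' * X ^ 2 + C g₃' * X + C g₄' : k[X]))
    (h₁ : g₂ ^ 3 / g₃ ^ 2 = g₂' ^ 3 / g₃' ^ 2)
    (h₂ : g₂ * g₄ / g₃ ^ 2 = g₂' * g₄' / g₃' ^ 2)
    (h₃ : g₄ ^ 3 / g₃ ^ 4 = g₄' ^ 3 / g₃' ^ 4) :
    ∃ t : k, t ≠ 0 ∧ g₂' = g₂ / t ^ 2 ∧ g₃' = g₃ / t ^ 3 ∧ g₄' = g₄ / t ^ 4 ∧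
      ∃ s : k, s ^ 3 = t ^ 4 :=
  picard_invariants_determine_curve_general g₂ g₃ g₄ g₂' g₃' g₄' hg₃ hg₃' h₁ h₂ h₃
end

section
/- Let L be a field of characteristic different from 2 and 3, and let C : y³ = x⁴ + g₂x² + g₃x + g₄ be a Picard curve in normal form over L with g₃ ≠ 0. Suppose the three invariants j₁ = g₂³/g₃², j₂ = g₂g₄/g₃², j₃ = g₄³/g₃⁴ all lie in a subfield k of L. Then C has a model over k: there exist g₂', g₃', g₄' ∈ k with g₃' ≠ 0 such that x⁴ + g₂'x² + g₃'x + g₄' is squarefree and the normal-form Picard curve y³ = x⁴ + g₂'x² + g₃'x + g₄' over k has the same invariant triple (j₁, j₂, j₃) as C. -/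
/-!
Rescaling `x ↦ s x` turns `y³ = x⁴ + g₂x² + g₃x + g₄` into the isomorphic curve with
coefficients `(g₂s², g₃s³, g₄s⁴)`, and the invariants are exactly the weight-zero quotients of
this grading, so they do not change. If `g₂ ≠ 0`, the scale `s = g₂/g₃` gives coefficients
`(j₁, j₁, j₁j₂)`; if `g₂ = 0 ≠ g₄`, the scale `s = g₃/g₄` gives `(0, j₃⁻¹, j₃⁻¹)`. If
`g₂ = g₄ = 0` all invariants vanish and `y³ = x⁴ + x` is a model over the prime field.
-/

open Polynomial

theorem MulEquiv.squarefree_map_iff {M N : Type*} [Monoid M] [Monoid N] (f : M ≃* N) {x : M} :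
    Squarefree (f x) ↔ Squarefree x := by
  refine ⟨fun h a ha => ?_, fun h a ha => ?_⟩
  · exact (h (f a) (by simpa using map_dvd f ha)).of_map f
  · have : f.symm a * f.symm a ∣ x := by simpa using map_dvd f.symm ha
    simpa using (h _ this).map f

namespace Polynomial

variable {R : Type*} [CommRing R]

theorem squarefree_comp_C_mul_X_iff {p : R[X]} {s : R} (hs : IsUnit s) :
    Squarefree (p.comp (C s * X)) ↔ Squarefree p := by
  let := hs.invertible
  simpa [comp_eq_aeval] using (algEquivCMulXAddC s 0).toMulEquiv.squarefree_map_iff (x := p)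

theorem separable_X_pow_four_add_X (h3 : IsUnit (3 : R)) : (X ^ 4 + X : R[X]).Separable := by
  obtain ⟨u, hu⟩ := h3.exists_left_inv
  refine ⟨C u * (-16 * X ^ 2), C u * (4 * X ^ 3 + 3), ?_⟩
  have hu' : C u * 3 = (1 : R[X]) := by rw [← C_ofNat, ← C_mul, hu, C_1]
  simp only [derivative_add, derivative_X_pow, derivative_X, Nat.cast_ofNat, C_ofNat]
  linear_combination hu'

noncomputable def picardQuartic (g₂ g₃ g₄ : R) : R[X] :=
  X ^ 4 + C g₂ * X ^ 2 + C g₃ * X + C g₄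

theorem picardQuartic_comp_C_mul_X (g₂ g₃ g₄ s : R) :
    (picardQuartic (g₂ * s ^ 2) (g₃ * s ^ 3) (g₄ * s ^ 4)).comp (C s * X) =
      C (s ^ 4) * picardQuartic g₂ g₃ g₄ := by
  simp only [picardQuartic, add_comp, mul_comp, pow_comp, X_comp, C_comp, C_mul, C_pow]
  ring

theorem squarefree_picardQuartic_scale_iff {g₂ g₃ g₄ s : R} (hs : IsUnit s) :
    Squarefree (picardQuartic (g₂ * s ^ 2) (g₃ * s ^ 3) (g₄ * s ^ 4)) ↔
      Squarefree (picardQuartic g₂ g₃ g₄) := by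
  rw [← squarefree_comp_C_mul_X_iff hs, picardQuartic_comp_C_mul_X,
    (associated_unit_mul_left _ _ (isUnit_C.2 (hs.pow 4))).squarefree_iff]

end Polynomial

section Invariants

variable {K : Type*} [Field K]

def picardInvariants (g₂ g₃ g₄ : K) : K × K × K :=
  (g₂ ^ 3 / g₃ ^ 2, g₂ * g₄ / g₃ ^ 2, g₄ ^ 3 / g₃ ^ 4)

theorem picardInvariants_scale (g₂ g₃ g₄ : K) {s : K} (hs : s ≠ 0) :
    picardInvariants (g₂ * s ^ 2) (g₃ * s ^ 3) (g₄ * s ^ 4) = picardInvariants g₂ g₃ g₄ := by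
  have h6 : s ^ 6 ≠ 0 := pow_ne_zero _ hs
  have h12 : s ^ 12 ≠ 0 := pow_ne_zero _ hs
  simp only [picardInvariants, Prod.mk.injEq]
  refine ⟨?_, ?_, ?_⟩
  · rw [← mul_div_mul_right (g₂ ^ 3) _ h6]; ring_nf
  · rw [← mul_div_mul_right (g₂ * g₄) _ h6]; ring_nf
  · rw [← mul_div_mul_right (g₄ ^ 3) _ h12]; ring_nf

theorem exists_scale_mem_of_picardInvariants_mem (k : Subfield K) {g₂ g₃ g₄ : K} (hg₃ : g₃ ≠ 0)
    (hg : g₂ ≠ 0 ∨ g₄ ≠ 0) (h₁ : g₂ ^ 3 / g₃ ^ 2 ∈ k) (h₂ : g₂ * g₄ / g₃ ^ 2 ∈ k)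
    (h₃ : g₄ ^ 3 / g₃ ^ 4 ∈ k) :
    ∃ s ≠ 0, g₂ * s ^ 2 ∈ k ∧ g₃ * s ^ 3 ∈ k ∧ g₄ * s ^ 4 ∈ k := by
  by_cases hg₂ : g₂ = 0
  · have hg₄ : g₄ ≠ 0 := hg.resolve_left (not_not.2 hg₂)
    have h₃' := k.inv_mem h₃
    refine ⟨g₃ / g₄, div_ne_zero hg₃ hg₄, by simp [hg₂], ?_, ?_⟩
    · convert h₃' using 1; field_simp
    · convert h₃' using 1; field_simp
  · refine ⟨g₂ / g₃, div_ne_zero hg₂ hg₃, ?_, ?_, ?_⟩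
    · convert h₁ using 1; field_simp
    · convert h₁ using 1; field_simp
    · convert k.mul_mem h₁ h₂ using 1; field_simp

end Invariants

theorem picard_model_over_field_of_invariants_general
    {L : Type*} [Field L] (hchar3 : ringChar L ≠ 3)
    (k : Subfield L) (g₂ g₃ g₄ : L) (hg₃ : g₃ ≠ 0)
    (hsf : Squarefree (X ^ 4 + C g₂ * X ^ 2 + C g₃ * X + C g₄ : L[X]))
    (h₁ : g₂ ^ 3 / g₃ ^ 2 ∈ k) (h₂ : g₂ * g₄ / g₃ ^ 2 ∈ k)
    (h₃ : g₄ ^ 3 / g₃ ^ 4 ∈ k) :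
    ∃ g₂' g₃' g₄' : L, g₂' ∈ k ∧ g₃' ∈ k ∧ g₄' ∈ k ∧ g₃' ≠ 0 ∧
      Squarefree (X ^ 4 + C g₂' * X ^ 2 + C g₃' * X + C g₄' : L[X]) ∧
      g₂' ^ 3 / g₃' ^ 2 = g₂ ^ 3 / g₃ ^ 2 ∧
      g₂' * g₄' / g₃' ^ 2 = g₂ * g₄ / g₃ ^ 2 ∧
      g₄' ^ 3 / g₃' ^ 4 = g₄ ^ 3 / g₃ ^ 4 := by
  by_cases hdeg : g₂ = 0 ∧ g₄ = 0
  · obtain ⟨rfl, rfl⟩ := hdeg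
    have h3 : (3 : L) ≠ 0 := fun h =>
      hchar3 (CharP.ringChar_of_prime_eq_zero Nat.prime_three (by exact_mod_cast h))
    refine ⟨0, 1, 0, k.zero_mem, k.one_mem, k.zero_mem, one_ne_zero, ?_, by simp, by simp, by simp⟩
    simpa using (separable_X_pow_four_add_X h3.isUnit).squarefree
  · obtain ⟨s, hs, m₂, m₃, m₄⟩ := exists_scale_mem_of_picardInvariants_mem k hg₃
      (not_and_or.1 hdeg) h₁ h₂ h₃
    refine ⟨g₂ * s ^ 2, g₃ * s ^ 3, g₄ * s ^ 4, m₂, m₃, m₄, mul_ne_zero hg₃ (pow_ne_zero _ hs),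
      (squarefree_picardQuartic_scale_iff hs.isUnit).2 hsf, ?_⟩
    simpa [picardInvariants] using picardInvariants_scale g₂ g₃ g₄ hs

/-- A normal-form Picard curve over `L` whose three invariants lie in a
subfield `k` of `L` has a model over `k`: a normal-form Picard curve with coefficients in `k`
and the same invariant triple. -/
theorem picard_model_over_field_of_invariants
    {L : Type*} [Field L] (hchar2 : ringChar L ≠ 2) (hchar3 : ringChar L ≠ 3)
    (k : Subfield L) (g₂ g₃ g₄ : L) (hg₃ : g₃ ≠ 0)
    (hsf : Squarefree (X ^ 4 + C g₂ * X ^ 2 + C g₃ * X + C g₄ : L[X]))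
    (h₁ : g₂ ^ 3 / g₃ ^ 2 ∈ k) (h₂ : g₂ * g₄ / g₃ ^ 2 ∈ k)
    (h₃ : g₄ ^ 3 / g₃ ^ 4 ∈ k) :
    ∃ g₂' g₃' g₄' : L, g₂' ∈ k ∧ g₃' ∈ k ∧ g₄' ∈ k ∧ g₃' ≠ 0 ∧
      Squarefree (X ^ 4 + C g₂' * X ^ 2 + C g₃' * X + C g₄' : L[X]) ∧
      g₂' ^ 3 / g₃' ^ 2 = g₂ ^ 3 / g₃ ^ 2 ∧
      g₂' * g₄' / g₃' ^ 2 = g₂ * g₄ / g₃ ^ 2 ∧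
      g₄' ^ 3 / g₃' ^ 4 = g₄ ^ 3 / g₃ ^ 4 :=
  picard_model_over_field_of_invariants_general hchar3 k g₂ g₃ g₄ hg₃ hsf h₁ h₂ h₃
end

section
/- Let K be a number field of degree 6 over ℚ and let ρ : K → K be a ℚ-algebra automorphism such that for every field embedding φ : K → ℂ and every x ∈ K one has φ(ρ(x)) = the complex conjugate of φ(x). Let p be a rational prime and let π ∈ O_K satisfy π·ρ(π) = p and ℚ(π) = K. Then the index of the subring ℤ[π] in the subring ℤ[π, ρ(π)] (as additive subgroups of O_K) is finite and is a power of p. -/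
/-!
Write `σ = ρ π`, `R = ℤ[π]` and `S = ℤ[π, σ]`. Multiplying a monic equation
`σ ^ (e + 1) + a_e σ ^ e + ⋯ + a_0 = 0` by `π ^ e` and using `π ^ e σ ^ i = p ^ i π ^ (e - i)` for
`i ≤ e` shows `p ^ e σ ∈ R`. The elements `x` with `p ^ n x ∈ R` for some `n` form a subring
containing `π` and `σ`, so every element of `S / R` is killed by a power of `p`. Being finitely
generated, `S / R` is then a finite `p`-group.
-/

open Polynomial

namespace Subring

variable {A : Type*} [CommRing A]

/-- `R[1/r] ∩ A`, when `r` is a non-zero-divisor. -/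
def powSaturation (R : Subring A) {r : A} (hr : r ∈ R) : Subring A where
  carrier := {x | ∃ n : ℕ, r ^ n * x ∈ R}
  mul_mem' := by
    rintro a b ⟨n, ha⟩ ⟨m, hb⟩
    exact ⟨n + m, by simpa only [pow_add, mul_mul_mul_comm] using R.mul_mem ha hb⟩
  one_mem' := ⟨0, by simp⟩
  add_mem' := by
    rintro a b ⟨n, ha⟩ ⟨m, hb⟩
    refine ⟨n + m, ?_⟩
    have hsplit : r ^ (n + m) * (a + b) = r ^ m * (r ^ n * a) + r ^ n * (r ^ m * b) := by ring
    rw [hsplit]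
    exact R.add_mem (R.mul_mem (R.pow_mem hr m) ha) (R.mul_mem (R.pow_mem hr n) hb)
  zero_mem' := ⟨0, by simp⟩
  neg_mem' := by
    rintro a ⟨n, ha⟩
    exact ⟨n, by simpa only [mul_neg] using R.neg_mem ha⟩

theorem mem_powSaturation {R : Subring A} {r : A} (hr : r ∈ R) {x : A} :
    x ∈ R.powSaturation hr ↔ ∃ n : ℕ, r ^ n * x ∈ R :=
  Iff.rfl

theorem exists_pow_mul_mem_of_isIntegral {R : Subring A} {π σ : A} (hπ : π ∈ R)
    (hπσ : π * σ ∈ R) (hσ : IsIntegral ℤ σ) : ∃ n : ℕ, (π * σ) ^ n * σ ∈ R := by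
  obtain ⟨f, hmonic, hfσ⟩ := hσ
  rcases hdeg : f.natDegree with _ | e
  · have : Subsingleton A := by
      rw [hmonic.natDegree_eq_zero.1 hdeg, eval₂_one] at hfσ
      exact subsingleton_of_zero_eq_one hfσ.symm
    exact ⟨0, Subsingleton.elim 0 ((π * σ) ^ 0 * σ) ▸ R.zero_mem⟩
  have hrel : σ ^ (e + 1) = -∑ i ∈ Finset.range (e + 1), (f.coeff i : A) * σ ^ i := by
    rw [hmonic.as_sum, hdeg] at hfσ
    simp only [eval₂_add, eval₂_X_pow, eval₂_finsetSum, eval₂_mul, eval₂_C] at hfσ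
    simp only [algebraMap_int_eq, eq_intCast] at hfσ
    linear_combination hfσ
  have hexpand : (π * σ) ^ e * σ =
      -∑ i ∈ Finset.range (e + 1), (f.coeff i : A) * ((π * σ) ^ i * π ^ (e - i)) := by
    rw [mul_pow, mul_assoc, ← pow_succ, hrel, mul_neg, Finset.mul_sum]
    refine congrArg _ (Finset.sum_congr rfl fun i hi ↦ ?_)
    rw [← pow_mul_pow_sub π (Nat.lt_succ_iff.1 (Finset.mem_range.1 hi))]
    ring
  refine ⟨e, hexpand ▸ R.neg_mem (R.sum_mem fun i _ ↦ ?_)⟩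
  exact R.mul_mem (intCast_mem R _) (R.mul_mem (R.pow_mem hπσ i) (R.pow_mem hπ _))

theorem closure_pair_le_powSaturation {R : Subring A} {π σ : A} (hπ : π ∈ R)
    (hπσ : π * σ ∈ R) (hσ : IsIntegral ℤ σ) : closure {π, σ} ≤ R.powSaturation hπσ := by
  rw [closure_le, Set.insert_subset_iff, Set.singleton_subset_iff]
  exact ⟨⟨0, by simpa using hπ⟩, exists_pow_mul_mem_of_isIntegral hπ hπσ hσ⟩

theorem fg_toAddSubgroup_closure_of_isIntegral {s : Set A} (hs : s.Finite)
    (hint : ∀ x ∈ s, IsIntegral ℤ x) : (closure s).toAddSubgroup.FG := by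
  have hfg := fg_adjoin_of_finite hs hint
  rw [Algebra.adjoin_int, Submodule.fg_iff_addSubgroup_fg] at hfg
  exact hfg

end Subring

theorem AddSubgroup.exists_relIndex_eq_pow_of_forall_exists_pow_nsmul_mem {G : Type*}
    [AddCommGroup G] {H K : AddSubgroup G} (hK : K.FG) {p : ℕ} (hp : p.Prime)
    (h : ∀ x ∈ K, ∃ n : ℕ, p ^ n • x ∈ H) : ∃ m : ℕ, H.relIndex K = p ^ m := by
  have : Fact p.Prime := ⟨hp⟩
  have : AddGroup.FG K := (AddGroup.fg_iff_addSubgroup_fg K).2 hK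
  have hkill : ∀ q : K ⧸ H.addSubgroupOf K, ∃ n : ℕ, p ^ n • q = 0 := by
    rintro ⟨x⟩
    obtain ⟨n, hn⟩ := h x x.2
    exact ⟨n, (QuotientAddGroup.eq_zero_iff _).2 (by simpa [AddSubgroup.mem_addSubgroupOf] using hn)⟩
  have : Finite (K ⧸ H.addSubgroupOf K) :=
    AddCommGroup.finite_of_fg_isAddTorsion _ fun q ↦
      let ⟨n, hn⟩ := hkill q
      isOfFinAddOrder_iff_nsmul_eq_zero.2 ⟨p ^ n, pow_pos hp.pos n, hn⟩
  have hpGroup : IsPGroup p (Multiplicative (K ⧸ H.addSubgroupOf K)) := fun g ↦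
    (hkill g.toAdd).imp fun _ hn ↦ Multiplicative.toAdd.injective hn
  obtain ⟨m, hm⟩ := IsPGroup.iff_card.1 hpGroup
  exact ⟨m, hm⟩

theorem index_zpi_in_zpipibar_is_p_power_general
    {K : Type*} [Field K] [NumberField K]
    (ρ : K ≃ₐ[ℚ] K)
    (p : ℕ) (hp : p.Prime)
    (π : K) (hπ : IsIntegral ℤ π)
    (hnorm : π * ρ π = (p : K)) :
    (Subring.closure {π}).toAddSubgroup.relIndex
        (Subring.closure {π, ρ π}).toAddSubgroup ≠ 0 ∧
      ∃ m : ℕ,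
        (Subring.closure {π}).toAddSubgroup.relIndex
            (Subring.closure {π, ρ π}).toAddSubgroup = p ^ m := by
  have hρπ : IsIntegral ℤ (ρ π) := map_isIntegral_int ρ hπ
  have hπR : π ∈ Subring.closure {π} := Subring.subset_closure rfl
  have hpR : π * ρ π ∈ Subring.closure {π} := hnorm ▸ natCast_mem _ p
  have hS : (Subring.closure {π, ρ π}).toAddSubgroup.FG :=
    Subring.fg_toAddSubgroup_closure_of_isIntegral (Set.toFinite _) (by
      rintro x (rfl | rfl)
      exacts [hπ, hρπ])
  have hkill : ∀ x ∈ (Subring.closure {π, ρ π}).toAddSubgroup,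
      ∃ n : ℕ, p ^ n • x ∈ (Subring.closure {π}).toAddSubgroup := fun x hx ↦ by
    obtain ⟨n, hn⟩ :=
      (Subring.mem_powSaturation hpR).1 (Subring.closure_pair_le_powSaturation hπR hpR hρπ hx)
    exact ⟨n, by rwa [nsmul_eq_mul, Nat.cast_pow, ← hnorm]⟩
  obtain ⟨m, hm⟩ := AddSubgroup.exists_relIndex_eq_pow_of_forall_exists_pow_nsmul_mem hS hp hkill
  exact ⟨hm ▸ pow_ne_zero m hp.ne_zero, m, hm⟩

/-- For a sextic CM-field `K` with complex conjugation `ρ` and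
`π ∈ O_K` with `π·ρ(π) = p` and `ℚ(π) = K`, the index of `ℤ[π]` in `ℤ[π, ρ(π)]`
(as additive subgroups) is finite and is a power of `p`. -/
theorem index_zpi_in_zpipibar_is_p_power
    {K : Type*} [Field K] [NumberField K]
    (hdeg : Module.finrank ℚ K = 6)
    (ρ : K ≃ₐ[ℚ] K)
    (hρ : ∀ (φ : K →+* ℂ) (x : K), φ (ρ x) = starRingEnd ℂ (φ x))
    (p : ℕ) (hp : p.Prime)
    (π : K) (hπ : IsIntegral ℤ π)
    (hnorm : π * ρ π = (p : K))
    (hgen : Algebra.adjoin ℚ {π} = ⊤) :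
    (Subring.closure {π}).toAddSubgroup.relIndex
        (Subring.closure {π, ρ π}).toAddSubgroup ≠ 0 ∧
      ∃ m : ℕ,
        (Subring.closure {π}).toAddSubgroup.relIndex
            (Subring.closure {π, ρ π}).toAddSubgroup = p ^ m :=
  index_zpi_in_zpipibar_is_p_power_general ρ p hp π hπ hnorm
end
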